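/- A permutation σ avoiding 132 is uniquely determined by the values and positions of its left-to-right minima; i.e., if σ, τ ∈ S_n(132) have the same set of positions of left-to-right minima and the same values at those positions, then σ = τ. -/
import Mathlib


namespace MahonianStats

open Finset

/-- The value sequence of a permutation of `{1,…,n}`: position `i` (0-indexed)
carries the value `σ(i+1) ∈ {1,…,n}`; positions `≥ n` carry the junk value `0`. -/
def pf {n : ℕ} (σ : Equiv.Perm (Fin n)) : ℕ → ℕ :=
  fun i => if h : i < n then ((σ ⟨i, h⟩ : Fin n) : ℕ) + 1 else 0

/-- The value sequence of a list (junk value `0` out of range). -/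
def lf (l : List ℕ) : ℕ → ℕ := fun i => l.getD i 0

/-- Descent positions (0-indexed). -/
def desSet (n : ℕ) (f : ℕ → ℕ) : Finset ℕ :=
  (range (n - 1)).filter fun i => f (i + 1) < f i

def des (n : ℕ) (f : ℕ → ℕ) : ℕ := (desSet n f).card

/-- Major index: sum of (1-indexed) descent positions. -/
def maj (n : ℕ) (f : ℕ → ℕ) : ℕ := ∑ i ∈ desSet n f, (i + 1)

/-- Occurrences of the vincular pattern (1-32). -/
def p1_32 (n : ℕ) (f : ℕ → ℕ) : ℕ :=
  ((range n ×ˢ range n).filter fun p =>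
    p.1 < p.2 ∧ p.2 + 1 < n ∧ f p.1 < f (p.2 + 1) ∧ f (p.2 + 1) < f p.2).card

/-- Occurrences of the vincular pattern (31-2). -/
def p31_2 (n : ℕ) (f : ℕ → ℕ) : ℕ :=
  ((range n ×ˢ range n).filter fun p =>
    p.1 + 1 < p.2 ∧ f (p.1 + 1) < f p.2 ∧ f p.2 < f p.1).card

/-- Occurrences of the vincular pattern (32-1). -/
def p32_1 (n : ℕ) (f : ℕ → ℕ) : ℕ :=
  ((range n ×ˢ range n).filter fun p =>
    p.1 + 1 < p.2 ∧ f p.2 < f (p.1 + 1) ∧ f (p.1 + 1) < f p.1).card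

/-- Occurrences of the vincular pattern (21-3). -/
def p21_3 (n : ℕ) (f : ℕ → ℕ) : ℕ :=
  ((range n ×ˢ range n).filter fun p =>
    p.1 + 1 < p.2 ∧ f (p.1 + 1) < f p.1 ∧ f p.1 < f p.2).card

/-- Occurrences of the vincular pattern (3-21). -/
def p3_21 (n : ℕ) (f : ℕ → ℕ) : ℕ :=
  ((range n ×ˢ range n).filter fun p =>
    p.1 < p.2 ∧ p.2 + 1 < n ∧ f (p.2 + 1) < f p.2 ∧ f p.2 < f p.1).card

/-- Occurrences of the vincular pattern (13-2). -/
def p13_2 (n : ℕ) (f : ℕ → ℕ) : ℕ :=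
  ((range n ×ˢ range n).filter fun p =>
    p.1 + 1 < p.2 ∧ f p.1 < f p.2 ∧ f p.2 < f (p.1 + 1)).card

/-- Occurrences of the vincular pattern (2-13). -/
def p2_13 (n : ℕ) (f : ℕ → ℕ) : ℕ :=
  ((range n ×ˢ range n).filter fun p =>
    p.1 < p.2 ∧ p.2 + 1 < n ∧ f p.2 < f p.1 ∧ f p.1 < f (p.2 + 1)).card

/-- Occurrences of the vincular pattern (2-31). -/
def p2_31 (n : ℕ) (f : ℕ → ℕ) : ℕ :=
  ((range n ×ˢ range n).filter fun p =>
    p.1 < p.2 ∧ p.2 + 1 < n ∧ f (p.2 + 1) < f p.1 ∧ f p.1 < f p.2).card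

/-- Number of inversions. -/
def invp (n : ℕ) (f : ℕ → ℕ) : ℕ :=
  ((range n ×ˢ range n).filter fun p => p.1 < p.2 ∧ f p.2 < f p.1).card

def mak (n : ℕ) (f : ℕ → ℕ) : ℕ := p1_32 n f + p31_2 n f + p32_1 n f + des n f

def mad (n : ℕ) (f : ℕ → ℕ) : ℕ := 2 * p2_31 n f + p31_2 n f + des n f

def Av123 (n : ℕ) (f : ℕ → ℕ) : Prop :=
  ¬ ∃ i j k, i < j ∧ j < k ∧ k < n ∧ f i < f j ∧ f j < f k
def Av132 (n : ℕ) (f : ℕ → ℕ) : Prop :=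
  ¬ ∃ i j k, i < j ∧ j < k ∧ k < n ∧ f i < f k ∧ f k < f j
def Av213 (n : ℕ) (f : ℕ → ℕ) : Prop :=
  ¬ ∃ i j k, i < j ∧ j < k ∧ k < n ∧ f j < f i ∧ f i < f k
def Av231 (n : ℕ) (f : ℕ → ℕ) : Prop :=
  ¬ ∃ i j k, i < j ∧ j < k ∧ k < n ∧ f k < f i ∧ f i < f j
def Av312 (n : ℕ) (f : ℕ → ℕ) : Prop :=
  ¬ ∃ i j k, i < j ∧ j < k ∧ k < n ∧ f j < f k ∧ f k < f i
def Av321 (n : ℕ) (f : ℕ → ℕ) : Prop :=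
  ¬ ∃ i j k, i < j ∧ j < k ∧ k < n ∧ f k < f j ∧ f j < f i

/-- `f j` is a left-to-right minimum (position `j`, 0-indexed). -/
def IsLRMin (f : ℕ → ℕ) (j : ℕ) : Prop := ∀ i < j, f j < f i

lemma pf_lt {n : ℕ} (σ : Equiv.Perm (Fin n)) {i : ℕ} (hi : i < n) :
    pf σ i = ((σ ⟨i, hi⟩ : Fin n) : ℕ) + 1 := by simp [pf, hi]

lemma pf_inj {n : ℕ} (σ : Equiv.Perm (Fin n)) {i j : ℕ} (hi : i < n) (hj : j < n)
    (h : pf σ i = pf σ j) : i = j := by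
  rw [pf_lt σ hi, pf_lt σ hj] at h
  have : σ ⟨i, hi⟩ = σ ⟨j, hj⟩ := Fin.ext (by omega)
  have := σ.injective this
  exact congrArg Fin.val this

lemma aux_not_lt {n : ℕ} (σ τ : Equiv.Perm (Fin n))
    (hτ : Av132 n (pf τ)) {j : ℕ} (hj : j < n)
    (hpre : ∀ i < j, pf σ i = pf τ i)
    (hnm : ¬ IsLRMin (pf σ) j) : ¬ pf σ j < pf τ j := by
  intro hlt
  -- j' : position of value pf σ j in τ
  set x := σ ⟨j, hj⟩ with hx
  set j' := ((τ.symm x : Fin n) : ℕ) with hj'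
  have hj'n : j' < n := (τ.symm x).isLt
  have hτj' : pf τ j' = pf σ j := by
    rw [pf_lt τ hj'n, pf_lt σ hj]
    congr 2
    have : (⟨j', hj'n⟩ : Fin n) = τ.symm x := by ext; rfl
    rw [this, Equiv.apply_symm_apply]
  have hne : j' ≠ j := by intro h; rw [h] at hτj'; omega
  have hjj' : j < j' := by
    rcases lt_or_gt_of_ne hne with h | h
    · exfalso
      have := hpre j' h
      exact hne (pf_inj σ hj'n hj (by omega))
    · exact h
  simp only [IsLRMin, not_forall] at hnm
  obtain ⟨i0, hi0j, hnlt⟩ := hnm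
  have hi0n : i0 < n := lt_trans hi0j hj
  have hne2 : i0 ≠ j := Nat.ne_of_lt hi0j
  have h1 : pf σ i0 < pf σ j := by
    rcases Nat.lt_or_ge (pf σ i0) (pf σ j) with h | h
    · exact h
    · exact absurd (pf_inj σ hj hi0n (by omega)) (Ne.symm hne2)
  exact hτ ⟨i0, j, j', hi0j, hjj', hj'n, by rw [hτj', ← hpre i0 hi0j]; omega⟩

/-- a 132-avoiding permutation is uniquely determined by the positions and
values of its left-to-right minima. -/
theorem stmt5 (n : ℕ) (σ τ : Equiv.Perm (Fin n))
    (hσ : Av132 n (pf σ)) (hτ : Av132 n (pf τ))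
    (hpos : ∀ j < n, (IsLRMin (pf σ) j ↔ IsLRMin (pf τ) j))
    (hval : ∀ j < n, IsLRMin (pf σ) j → pf σ j = pf τ j) :
    σ = τ := by
  have key : ∀ j, j < n → pf σ j = pf τ j := by
    intro j
    induction j using Nat.strong_induction_on with
    | _ j ih =>
      intro hj
      by_cases hm : IsLRMin (pf σ) j
      · exact hval j hj hm
      · have hpre : ∀ i < j, pf σ i = pf τ i := fun i hi => ih i hi (lt_trans hi hj)
        have hmτ : ¬ IsLRMin (pf τ) j := fun h => hm ((hpos j hj).mpr h)
        have h1 := aux_not_lt σ τ hτ hj hpre hm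
        have h2 := aux_not_lt τ σ hσ hj (fun i hi => (hpre i hi).symm) hmτ
        omega
  ext x
  have := key x.1 x.isLt
  rw [pf_lt σ x.isLt, pf_lt τ x.isLt] at this
  simpa using Nat.add_right_cancel this

end MahonianStats
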